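/- arXiv:1209.0368 — 6 statements merged into one kernel-verified Lean document; each statement's English description precedes it below -/
import Mathlib

section
/- The Fenchel conjugate of the latent group lasso penalty Ω^G_p is the indicator function of the set K = { u ∈ ℝ^d : ‖P_r u‖_q ≤ 1 for all r = 1,...,B }, where q is the conjugate exponent of p (1/p + 1/q = 1). That is, (Ω^G_p)*(u) = 0 if u ∈ K and +∞ otherwise. -/
open scoped Classical ENNReal NNReal

noncomputable def pNormOn (p : ℝ≥0∞) [Fact (1 ≤ p)] {ι : Type*} [Fintype ι] (v : ι → ℝ) : ℝ :=
  ‖(WithLp.equiv p (ι → ℝ)).symm v‖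

noncomputable def grpNorm {d : ℕ} (p : ℝ≥0∞) [Fact (1 ≤ p)] (G : Finset (Fin d))
    (x : Fin d → ℝ) : ℝ :=
  pNormOn p (fun j : {j : Fin d // j ∈ G} => x j.1)

def embed {d : ℕ} (G : Finset (Fin d)) (v : {j : Fin d // j ∈ G} → ℝ) : Fin d → ℝ :=
  fun j => if h : j ∈ G then v ⟨j, h⟩ else 0

noncomputable def Omega {d B : ℕ} (p : ℝ≥0∞) [Fact (1 ≤ p)] (G : Fin B → Finset (Fin d))
    (x : Fin d → ℝ) : ℝ :=
  sInf { s | ∃ v : (r : Fin B) → {j : Fin d // j ∈ G r} → ℝ,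
    (∑ r, embed (G r) (v r)) = x ∧ s = ∑ r, pNormOn p (v r) }

noncomputable def nrm2 {d : ℕ} (x : Fin d → ℝ) : ℝ := Real.sqrt (∑ j, (x j) ^ 2)

/-! For `u ∈ K`, Hölder's inequality on each group gives `⟨x, u⟩ = Σ_r ⟨v_r, P_r u⟩ ≤ Σ_r ‖v_r‖_p`
for every latent decomposition `x = Σ_r P_r* v_r`, so the conjugate is `≤ 0`, with equality at
`x = 0`. If `‖P_r u‖_q > 1` for some `r`, take `w` supported on `G_r` with `‖w‖_p ≤ 1` and
`⟨w, u⟩ = ‖P_r u‖_q`; then `Ω(t w) ≤ t`, so `⟨t w, u⟩ − Ω(t w) ≥ t (‖P_r u‖_q − 1) → ∞`. -/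

section PNorm

variable {ι : Type*} [Fintype ι]

lemma pNormOn_nonneg (p : ℝ≥0∞) [Fact (1 ≤ p)] (v : ι → ℝ) : 0 ≤ pNormOn p v :=
  norm_nonneg _

lemma pNormOn_smul (p : ℝ≥0∞) [Fact (1 ≤ p)] (t : ℝ) (v : ι → ℝ) :
    pNormOn p (t • v) = |t| * pNormOn p v := by
  simp [pNormOn, norm_smul]

lemma pNormOn_zero (p : ℝ≥0∞) [Fact (1 ≤ p)] : pNormOn p (0 : ι → ℝ) = 0 := by
  simpa using pNormOn_smul p 0 (0 : ι → ℝ)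

theorem sum_mul_le_pNormOn_mul_pNormOn (p q : ℝ≥0∞) [Fact (1 ≤ p)] [Fact (1 ≤ q)]
    [p.HolderConjugate q] (v u : ι → ℝ) :
    ∑ j, v j * u j ≤ pNormOn p v * pNormOn q u := by
  -- Mathlib's `ℓᵖ × ℓ^q` pairing covers every conjugate pair at once, including `p = ∞`.
  let e : lp (fun _ : ι => ℝ) p := (lpPiLpₗᵢ _ ℝ).symm (WithLp.toLp p v)
  let f : lp (fun _ : ι => ℝ) q := (lpPiLpₗᵢ _ ℝ).symm (WithLp.toLp q u)
  let pairing := lp.dualPairing p q (fun _ : ι => ContinuousLinearMap.mul ℝ ℝ) (K := 1)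
    fun _ => by simp
  calc ∑ j, v j * u j = ∑' j, v j * u j := (tsum_fintype _).symm
    _ = pairing e f := (lp.dualPairing_apply (fun _ => ContinuousLinearMap.mul ℝ ℝ) _ e f).symm
    _ ≤ ‖pairing‖ * ‖e‖ * ‖f‖ := (Real.le_norm_self _).trans (pairing.le_opNorm₂ e f)
    _ ≤ 1 * ‖e‖ * ‖f‖ := by gcongr; exact lp.norm_dualPairing _ _
    _ = pNormOn p v * pNormOn q u := by
        simp only [one_mul, e, f, LinearIsometryEquiv.norm_map, pNormOn]; rfl

lemma pNormOn_eq_sum (p : ℝ≥0∞) [Fact (1 ≤ p)] (hp : p ≠ ⊤) (v : ι → ℝ) :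
    pNormOn p v = (∑ j, |v j| ^ p.toReal) ^ (1 / p.toReal) := by
  rw [pNormOn, PiLp.norm_eq_sum (ENNReal.toReal_pos (zero_lt_one.trans_le Fact.out).ne' hp)]
  rfl

theorem exists_pNormOn_le_one_sum_mul_eq (p q : ℝ≥0∞) [Fact (1 ≤ p)] [Fact (1 ≤ q)]
    [p.HolderConjugate q] (hq : q ≠ ⊤) (u : ι → ℝ) :
    ∃ w, pNormOn p w ≤ 1 ∧ ∑ j, w j * u j = pNormOn q u := by
  by_cases hp : p = ⊤
  · obtain rfl : q = 1 := (ENNReal.HolderConjugate.eq_top_iff_eq_one p q).mp hp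
    subst hp
    refine ⟨fun j => SignType.sign (u j), ?_, ?_⟩
    · simp only [pNormOn, WithLp.equiv_symm_apply, PiLp.norm_toLp]
      refine (pi_norm_le_iff_of_nonneg zero_le_one).mpr fun j => ?_
      rcases lt_trichotomy (u j) 0 with h | h | h <;> simp [h]
    · simp [pNormOn_eq_sum 1 ENNReal.one_ne_top, sign_mul_self]
  have hq1 : 1 < q.toReal := by
    have : q ≠ 1 := (ENNReal.HolderConjugate.ne_top_iff_ne_one p q).mp hp
    exact (ENNReal.toReal_lt_toReal ENNReal.one_ne_top hq).mpr ((Fact.out : 1 ≤ q).lt_of_ne' this)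
  have hqp : q.toReal.HolderConjugate p.toReal :=
    (ENNReal.HolderConjugate.toReal_iff hq1).mpr inferInstance
  obtain ⟨g, hg, hgu⟩ := (NNReal.isGreatest_Lp Finset.univ (fun j => ‖u j‖₊) hqp).1
  refine ⟨fun j => SignType.sign (u j) * g j, ?_, ?_⟩
  · rw [pNormOn_eq_sum p hp]
    refine Real.rpow_le_one (by positivity) ?_ (by positivity)
    calc ∑ j, |SignType.sign (u j) * (g j : ℝ)| ^ p.toReal ≤ ∑ j, (g j : ℝ) ^ p.toReal := by
          gcongr with j
          rw [abs_mul, NNReal.abs_eq]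
          refine mul_le_of_le_one_left (g j).2 ?_
          rcases lt_trichotomy (u j) 0 with h | h | h <;> simp [h]
      _ ≤ 1 := by exact_mod_cast hg
  · rw [pNormOn_eq_sum q hq]
    have hgu' := congrArg ((↑) : ℝ≥0 → ℝ) hgu
    push_cast [Real.norm_eq_abs] at hgu'
    simpa only [mul_right_comm, sign_mul_self] using hgu'

end PNorm

section LatentGroupLasso

variable {d B : ℕ}

lemma embed_zero (G : Finset (Fin d)) : embed G 0 = 0 := by
  funext j; simp [embed]

lemma sum_embed_mul (G : Finset (Fin d)) (v : {j : Fin d // j ∈ G} → ℝ) (u : Fin d → ℝ) :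
    ∑ j, embed G v j * u j = ∑ j : {j : Fin d // j ∈ G}, v j * u j := by
  rw [← Finset.sum_subset (Finset.subset_univ G) fun j _ hj => by simp [embed, hj],
    ← Finset.sum_attach G, Finset.univ_eq_attach]
  exact Finset.sum_congr rfl fun j _ => by simp [embed, j.2]

lemma exists_sum_embed_eq (G : Fin B → Finset (Fin d)) (hcover : ∀ j : Fin d, ∃ r, j ∈ G r)
    (x : Fin d → ℝ) :
    ∃ v : (r : Fin B) → {j : Fin d // j ∈ G r} → ℝ, ∑ r, embed (G r) (v r) = x := by
  choose ρ hρ using hcover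
  refine ⟨fun r j => if ρ j = r then x j else 0, funext fun j => ?_⟩
  rw [Finset.sum_apply, Finset.sum_eq_single (ρ j)]
  · simp [embed, hρ j]
  · intro r _ hr
    simp [embed, Ne.symm hr]
  · simp

variable (p : ℝ≥0∞) [Fact (1 ≤ p)] (G : Fin B → Finset (Fin d))

lemma Omega_le_sum_pNormOn (v : (r : Fin B) → {j : Fin d // j ∈ G r} → ℝ) :
    Omega p G (∑ r, embed (G r) (v r)) ≤ ∑ r, pNormOn p (v r) := by
  refine csInf_le ⟨0, ?_⟩ ⟨v, rfl, rfl⟩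
  rintro s ⟨v, -, rfl⟩
  exact Finset.sum_nonneg fun r _ => pNormOn_nonneg p (v r)

lemma le_Omega (hcover : ∀ j : Fin d, ∃ r, j ∈ G r) {x : Fin d → ℝ} {c : ℝ}
    (h : ∀ v : (r : Fin B) → {j : Fin d // j ∈ G r} → ℝ,
      ∑ r, embed (G r) (v r) = x → c ≤ ∑ r, pNormOn p (v r)) :
    c ≤ Omega p G x := by
  obtain ⟨v, hv⟩ := exists_sum_embed_eq G hcover x
  refine le_csInf ⟨_, v, hv, rfl⟩ ?_
  rintro s ⟨v, hv, rfl⟩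
  exact h v hv

lemma Omega_zero (hcover : ∀ j : Fin d, ∃ r, j ∈ G r) : Omega p G 0 = 0 := by
  refine le_antisymm ?_ (le_Omega p G hcover fun v _ =>
    Finset.sum_nonneg fun r _ => pNormOn_nonneg p (v r))
  simpa [embed_zero, pNormOn_zero] using Omega_le_sum_pNormOn p G 0

lemma Omega_embed_le (r : Fin B) (v : {j : Fin d // j ∈ G r} → ℝ) :
    Omega p G (embed (G r) v) ≤ pNormOn p v := by
  obtain ⟨w, hwr, hw⟩ : ∃ w : (r' : Fin B) → {j : Fin d // j ∈ G r'} → ℝ,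
      w r = v ∧ ∀ r' ≠ r, w r' = 0 :=
    ⟨Pi.single r v, by simp, fun r' hr' => by simp [hr']⟩
  have hembed : ∑ r', embed (G r') (w r') = embed (G r) v := by
    rw [Fintype.sum_eq_single r fun r' hr' => by rw [hw r' hr', embed_zero], hwr]
  have hnorm : ∑ r', pNormOn p (w r') = pNormOn p v := by
    rw [Fintype.sum_eq_single r fun r' hr' => by rw [hw r' hr', pNormOn_zero], hwr]
  simpa only [hembed, hnorm] using Omega_le_sum_pNormOn p G w

theorem sum_mul_le_Omega (q : ℝ≥0∞) [Fact (1 ≤ q)] [p.HolderConjugate q]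
    (hcover : ∀ j : Fin d, ∃ r, j ∈ G r) {u : Fin d → ℝ} (hu : ∀ r, grpNorm q (G r) u ≤ 1)
    (x : Fin d → ℝ) :
    ∑ j, x j * u j ≤ Omega p G x := by
  refine le_Omega p G hcover fun v hv => ?_
  calc ∑ j, x j * u j = ∑ r, ∑ j, embed (G r) (v r) j * u j := by
        simp only [← hv, Finset.sum_apply, Finset.sum_mul]
        exact Finset.sum_comm
    _ ≤ ∑ r, pNormOn p (v r) * grpNorm q (G r) u := by
        gcongr with r
        rw [sum_embed_mul]
        exact sum_mul_le_pNormOn_mul_pNormOn p q _ _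
    _ ≤ ∑ r, pNormOn p (v r) := by
        gcongr with r
        exact mul_le_of_le_one_right (pNormOn_nonneg p _) (hu r)

theorem exists_sum_mul_sub_Omega_ge (q : ℝ≥0∞) [Fact (1 ≤ q)] [p.HolderConjugate q]
    (hq : q ≠ ⊤) (u : Fin d → ℝ) (r : Fin B) {t : ℝ} (ht : 0 ≤ t) :
    ∃ x, t * (grpNorm q (G r) u - 1) ≤ ∑ j, x j * u j - Omega p G x := by
  obtain ⟨w, hw, hwu⟩ := exists_pNormOn_le_one_sum_mul_eq p q hq fun j : {j // j ∈ G r} => u j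
  refine ⟨embed (G r) (t • w), ?_⟩
  have hpair : ∑ j, embed (G r) (t • w) j * u j = t * grpNorm q (G r) u := by
    simp only [sum_embed_mul, Pi.smul_apply, smul_eq_mul, mul_assoc, ← Finset.mul_sum, hwu,
      grpNorm]
  have hOmega : Omega p G (embed (G r) (t • w)) ≤ t :=
    calc Omega p G (embed (G r) (t • w)) ≤ pNormOn p (t • w) := Omega_embed_le p G r _
      _ = t * pNormOn p w := by rw [pNormOn_smul, abs_of_nonneg ht]
      _ ≤ t := mul_le_of_le_one_right ht hw
  linarith

end LatentGroupLasso

/-- The Fenchel conjugate of the latent group lasso penalty is the indicator function of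
`K = { u : ‖P_r u‖_q ≤ 1 ∀ r }`, where `q` is the conjugate exponent of `p`. -/
theorem stmt2 (p q : ℝ≥0∞) [Fact (1 ≤ p)] [Fact (1 ≤ q)] (hp : 1 < p) (hpq : 1/p + 1/q = 1)
    {d B : ℕ} (G : Fin B → Finset (Fin d)) (hcover : ∀ j : Fin d, ∃ r, j ∈ G r)
    (u : Fin d → ℝ) :
    (⨆ x : Fin d → ℝ, (((∑ j, x j * u j) - Omega p G x : ℝ) : EReal)) =
      if ∀ r, grpNorm q (G r) u ≤ 1 then (0 : EReal) else ⊤ := by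
  have : p.HolderConjugate q := ENNReal.holderConjugate_iff.mpr (by simpa using hpq)
  have hq : q ≠ ⊤ := fun h => hp.ne' ((ENNReal.HolderConjugate.eq_top_iff_eq_one q p).mp h)
  split_ifs with hu
  · refine le_antisymm (iSup_le fun x => ?_) (le_iSup_of_le 0 ?_)
    · exact EReal.coe_nonpos.mpr (sub_nonpos.mpr (sum_mul_le_Omega p G q hcover hu x))
    · simp [Omega_zero p G hcover]
  · obtain ⟨r, hr⟩ : ∃ r, 1 < grpNorm q (G r) u := by simpa using hu
    refine iSup_eq_top.mpr fun b hb => ?_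
    obtain ⟨M, hbM, -⟩ := EReal.exists_between_coe_real hb
    obtain ⟨x, hx⟩ := exists_sum_mul_sub_Omega_ge p G q hq u r
      (div_nonneg (abs_nonneg M) (sub_pos.mpr hr).le)
    refine ⟨x, hbM.trans_le (EReal.coe_le_coe_iff.mpr ?_)⟩
    rw [div_mul_cancel₀ _ (sub_pos.mpr hr).ne'] at hx
    exact (le_abs_self M).trans hx
end

section
/- Coordinate-wise non-expansiveness of the projection onto an intersection of group-norm cylinders: let S be any finite family of groups G ⊆ {1,...,d}, q ∈ [1,∞], λ > 0, and K_S = ∩_{G∈S} { x ∈ ℝ^d : ‖P_G x‖_q ≤ λ }. Then for every x ∈ ℝ^d and every coordinate i, |π_{K_S}(x)_i| ≤ |x_i|. -/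
/-!
The constraint set `K_S` is solid: shrinking coordinates in absolute value keeps a point inside,
because every `ℓ_q` group norm is monotone in the absolute values of the coordinates. If the
projection `y` of `x` had `|x i| < |y i|`, replacing `y i` by `x i` would give a point of `K_S`
strictly closer to `x` unless `x i = y i`.
-/

open scoped Classical ENNReal NNReal

theorem PiLp.norm_le_norm_of_forall_norm_le {ι : Type*} [Fintype ι] {β : ι → Type*}
    [∀ j, SeminormedAddCommGroup (β j)] (p : ℝ≥0∞) [Fact (1 ≤ p)] {u v : PiLp p β}
    (h : ∀ j, ‖u j‖ ≤ ‖v j‖) : ‖u‖ ≤ ‖v‖ := by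
  rcases eq_or_ne p ⊤ with rfl | hp
  · rw [PiLp.norm_eq_ciSup, PiLp.norm_eq_ciSup]
    exact Real.iSup_le (fun j => (h j).trans (le_ciSup (Finite.bddAbove_range fun i => ‖v i‖) j))
      (norm_nonneg v)
  · have hp0 : 0 < p.toReal := (ENNReal.toReal_pos_iff_ne_top p).mpr hp
    rw [PiLp.norm_eq_sum hp0, PiLp.norm_eq_sum hp0]
    gcongr with j
    exact h j

theorem pNormOn_le_pNormOn (p : ℝ≥0∞) [Fact (1 ≤ p)] {ι : Type*} [Fintype ι] {u v : ι → ℝ}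
    (h : ∀ j, |u j| ≤ |v j|) : pNormOn p u ≤ pNormOn p v :=
  PiLp.norm_le_norm_of_forall_norm_le p h

theorem grpNorm_le_grpNorm {d : ℕ} (p : ℝ≥0∞) [Fact (1 ≤ p)] (G : Finset (Fin d))
    {x y : Fin d → ℝ} (h : ∀ j, |x j| ≤ |y j|) : grpNorm p G x ≤ grpNorm p G y :=
  pNormOn_le_pNormOn p fun j => h j

theorem sum_sq_sub_update_add {ι : Type*} [Fintype ι] [DecidableEq ι] (x y : ι → ℝ) (i : ι) :
    ∑ j, (x j - Function.update y i (x i) j) ^ 2 + (x i - y i) ^ 2 = ∑ j, (x j - y j) ^ 2 := by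
  rw [← Finset.univ.add_sum_erase _ (Finset.mem_univ i),
    ← Finset.univ.add_sum_erase _ (Finset.mem_univ i)]
  have hrest : ∀ j ∈ Finset.univ.erase i,
      (x j - Function.update y i (x i) j) ^ 2 = (x j - y j) ^ 2 := fun j hj => by
    rw [Function.update_of_ne (Finset.ne_of_mem_erase hj)]
  rw [Finset.sum_congr rfl hrest, Function.update_self]
  ring

theorem abs_apply_le_of_isNearest_of_solid {ι : Type*} [Fintype ι] (K : Set (ι → ℝ))
    (hK : ∀ y ∈ K, ∀ z : ι → ℝ, (∀ j, |z j| ≤ |y j|) → z ∈ K) {x y : ι → ℝ} (hy : y ∈ K)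
    (hmin : ∀ z ∈ K, ∑ j, (x j - y j) ^ 2 ≤ ∑ j, (x j - z j) ^ 2) (i : ι) :
    |y i| ≤ |x i| := by
  by_contra! hlt
  set z := Function.update y i (x i)
  have hzy : ∀ j, |z j| ≤ |y j| := by
    intro j
    rcases eq_or_ne j i with rfl | hj
    · simpa [z] using hlt.le
    · simp [z, hj]
  have hsq : (x i - y i) ^ 2 ≤ 0 := by
    linarith [hmin z (hK y hy z hzy), sum_sq_sub_update_add x y i]
  have hxy : x i = y i :=
    sub_eq_zero.mp <| (pow_eq_zero_iff two_ne_zero).mp (le_antisymm hsq (sq_nonneg _))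
  exact hlt.ne (congrArg abs hxy)

theorem stmt5_general (q : ℝ≥0∞) [Fact (1 ≤ q)] {d : ℕ} (S : Finset (Finset (Fin d)))
    (lam : ℝ) (x y : Fin d → ℝ)
    (hyK : ∀ G ∈ S, grpNorm q G y ≤ lam)
    (hymin : ∀ z : Fin d → ℝ, (∀ G ∈ S, grpNorm q G z ≤ lam) →
      ∑ j, (x j - y j) ^ 2 ≤ ∑ j, (x j - z j) ^ 2)
    (i : Fin d) :
    |y i| ≤ |x i| :=
  abs_apply_le_of_isNearest_of_solid {z | ∀ G ∈ S, grpNorm q G z ≤ lam}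
    (fun _ hw _ hzw G hG => (grpNorm_le_grpNorm q G hzw).trans (hw G hG)) hyK hymin i

/-- Coordinate-wise non-expansiveness of the projection onto an intersection of
group-norm cylinders. -/
theorem stmt5 (q : ℝ≥0∞) [Fact (1 ≤ q)] {d : ℕ} (S : Finset (Finset (Fin d)))
    (lam : ℝ) (hlam : 0 < lam) (x y : Fin d → ℝ)
    (hyK : ∀ G ∈ S, grpNorm q G y ≤ lam)
    (hymin : ∀ z : Fin d → ℝ, (∀ G ∈ S, grpNorm q G z ≤ lam) →
      ∑ j, (x j - y j) ^ 2 ≤ ∑ j, (x j - z j) ^ 2)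
    (i : Fin d) :
    |y i| ≤ |x i| :=
  stmt5_general q S lam x y hyK hymin i
end

section
/- If a vector w already satisfies a subset S of the group constraints (i.e., ‖P_G w‖_q ≤ λ for all G ∈ S), then projecting w onto the intersection of all constraints equals projecting onto the intersection of the remaining constraints: π_{K}(w) = π_{K_{G∖S}}(w), where K = ∩_{G∈𝒢} {x : ‖P_G x‖_q ≤ λ} and K_{G∖S} = ∩_{G∈𝒢∖S} {x : ‖P_G x‖_q ≤ λ}. -/
open scoped Classical ENNReal NNReal

/-!
Each constraint set is convex and solid (closed under shrinking coordinates in absolute value),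
because `ℓ^q` norms are convex and monotone in the absolute values of the coordinates. Projecting
onto a solid set never increases a coordinate in absolute value: otherwise replacing that
coordinate of the projection by the one of `w` would stay in the set and be strictly closer to
`w`. Hence `z = π_{K_{G∖S}}(w)` satisfies `|z| ≤ |w|`, so it inherits the constraints in `S` from
`w` and lies in `K ⊆ K_{G∖S}`; it is then a nearest point of `K` to `w`, and nearest points of
convex sets are unique by the parallelogram law.
-/

open LatticeOrderedAddCommGroup

section PNorm

variable (q : ℝ≥0∞) [Fact (1 ≤ q)] {ι : Type*} [Fintype ι]

lemma convexOn_pNormOn : ConvexOn ℝ Set.univ (pNormOn q : (ι → ℝ) → ℝ) :=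
  (convexOn_norm convex_univ).comp_linearMap (WithLp.linearEquiv q ℝ (ι → ℝ)).symm.toLinearMap

lemma pNormOn_mono {u v : ι → ℝ} (h : |u| ≤ |v|) : pNormOn q u ≤ pNormOn q v := by
  unfold pNormOn
  rcases eq_or_ne q ⊤ with rfl | hq
  · rw [PiLp.norm_eq_ciSup, PiLp.norm_eq_ciSup]
    cases isEmpty_or_nonempty ι
    · simp [Real.iSup_of_isEmpty]
    · exact ciSup_mono (Set.finite_range _).bddAbove fun i => by simpa using h i
  · have hq0 : 0 < q.toReal :=
      ENNReal.toReal_pos (one_pos.trans_le (Fact.out : 1 ≤ q)).ne' hq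
    rw [PiLp.norm_eq_sum hq0, PiLp.norm_eq_sum hq0]
    gcongr with i
    simpa using h i

end PNorm

section GroupConstraints

variable (q : ℝ≥0∞) [Fact (1 ≤ q)] {d : ℕ}

def groupConstraintSet (GG : Finset (Finset (Fin d))) (lam : ℝ) : Set (Fin d → ℝ) :=
  {x | ∀ G ∈ GG, grpNorm q G x ≤ lam}

lemma convexOn_grpNorm (G : Finset (Fin d)) : ConvexOn ℝ Set.univ (grpNorm q G) :=
  (convexOn_pNormOn q).comp_linearMap (LinearMap.funLeft ℝ ℝ (Subtype.val : G → Fin d))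

lemma grpNorm_mono (G : Finset (Fin d)) {x y : Fin d → ℝ} (h : |x| ≤ |y|) :
    grpNorm q G x ≤ grpNorm q G y :=
  pNormOn_mono q fun j => h j.1

lemma convex_groupConstraintSet (GG : Finset (Finset (Fin d))) (lam : ℝ) :
    Convex ℝ (groupConstraintSet q GG lam) := by
  have h : groupConstraintSet q GG lam = ⋂ G ∈ GG, {x | grpNorm q G x ≤ lam} := by
    ext; simp [groupConstraintSet]
  rw [h]
  exact convex_iInter₂ fun G _ => by simpa using (convexOn_grpNorm q G).convex_le lam

lemma isSolid_groupConstraintSet (GG : Finset (Finset (Fin d))) (lam : ℝ) :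
    IsSolid (groupConstraintSet q GG lam) :=
  fun _ hx _ hyx G hG => (grpNorm_mono q G hyx).trans (hx G hG)

lemma groupConstraintSet_anti {GG GG' : Finset (Finset (Fin d))} (h : GG' ⊆ GG) (lam : ℝ) :
    groupConstraintSet q GG lam ⊆ groupConstraintSet q GG' lam :=
  fun _ hx G hG => hx G (h hG)

end GroupConstraints

section Projection

variable {ι : Type*} [Fintype ι] {K : Set (ι → ℝ)} {w y z : ι → ℝ}

lemma eq_of_isMinOn_sum_sq (hK : Convex ℝ K) (hy : y ∈ K) (hz : z ∈ K)
    (hymin : IsMinOn (fun u => ∑ i, (w i - u i) ^ 2) K y)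
    (hzmin : IsMinOn (fun u => ∑ i, (w i - u i) ^ 2) K z) : y = z := by
  have hm : (1 / 2 : ℝ) • y + (1 / 2 : ℝ) • z ∈ K := hK hy hz (by norm_num) (by norm_num) (by norm_num)
  have parallelogram : 4 * ∑ i, (w i - ((1 / 2 : ℝ) • y + (1 / 2 : ℝ) • z) i) ^ 2 + ∑ i, (y i - z i) ^ 2 =
      2 * ∑ i, (w i - y i) ^ 2 + 2 * ∑ i, (w i - z i) ^ 2 := by
    simp only [Finset.mul_sum, ← Finset.sum_add_distrib, Pi.add_apply, Pi.smul_apply, smul_eq_mul]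
    exact Finset.sum_congr rfl fun i _ => by ring
  have h_sum : ∑ i, (y i - z i) ^ 2 = 0 := by
    have hym := isMinOn_iff.1 hymin _ hm
    have hyz := isMinOn_iff.1 hymin z hz
    have hzy := isMinOn_iff.1 hzmin y hy
    have h_nonneg : 0 ≤ ∑ i, (y i - z i) ^ 2 := by positivity
    linarith
  funext i
  have := (Finset.sum_eq_zero_iff_of_nonneg fun i _ => sq_nonneg (y i - z i)).1 h_sum i
    (Finset.mem_univ i)
  exact sub_eq_zero.1 (pow_eq_zero_iff two_ne_zero |>.1 this)

lemma abs_le_abs_of_isMinOn_sum_sq (hK : IsSolid K) (hz : z ∈ K)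
    (hzmin : IsMinOn (fun u => ∑ i, (w i - u i) ^ 2) K z) : |z| ≤ |w| := by
  intro j
  by_contra! hj
  simp only [Pi.abs_apply] at hj
  set t := Function.update z j (w j)
  have ht : t ∈ K := hK hz fun i => by
    rcases eq_or_ne i j with rfl | hi
    · simpa [t] using hj.le
    · simp [t, hi]
  have hlt : ∑ i, (w i - t i) ^ 2 < ∑ i, (w i - z i) ^ 2 := by
    refine Finset.sum_lt_sum (fun i _ => ?_) ⟨j, Finset.mem_univ j, ?_⟩
    · rcases eq_or_ne i j with rfl | hi
      · simpa [t] using sq_nonneg _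
      · simp [t, hi]
    · have : w j - z j ≠ 0 := sub_ne_zero.2 fun h => hj.ne (by rw [h])
      simpa [t] using sq_pos_of_ne_zero this
  exact (isMinOn_iff.1 hzmin t ht).not_gt hlt

end Projection

theorem stmt7_general (q : ℝ≥0∞) [Fact (1 ≤ q)] {d : ℕ} (GG S : Finset (Finset (Fin d)))
    (lam : ℝ) (w y z : Fin d → ℝ)
    (hw : ∀ G ∈ S, grpNorm q G w ≤ lam)
    (hyK : ∀ G ∈ GG, grpNorm q G y ≤ lam)
    (hymin : ∀ u : Fin d → ℝ, (∀ G ∈ GG, grpNorm q G u ≤ lam) →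
      ∑ j, (w j - y j) ^ 2 ≤ ∑ j, (w j - u j) ^ 2)
    (hzK : ∀ G ∈ GG \ S, grpNorm q G z ≤ lam)
    (hzmin : ∀ u : Fin d → ℝ, (∀ G ∈ GG \ S, grpNorm q G u ≤ lam) →
      ∑ j, (w j - z j) ^ 2 ≤ ∑ j, (w j - u j) ^ 2) :
    y = z := by
  have hzmin' : IsMinOn (fun u => ∑ j, (w j - u j) ^ 2) (groupConstraintSet q (GG \ S) lam) z :=
    isMinOn_iff.2 hzmin
  have hz_abs : |z| ≤ |w| :=
    abs_le_abs_of_isMinOn_sum_sq (isSolid_groupConstraintSet q _ lam) hzK hzmin'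
  have hzK' : z ∈ groupConstraintSet q GG lam := fun G hG => by
    by_cases hGS : G ∈ S
    · exact (grpNorm_mono q G hz_abs).trans (hw G hGS)
    · exact hzK G (Finset.mem_sdiff.2 ⟨hG, hGS⟩)
  exact eq_of_isMinOn_sum_sq (convex_groupConstraintSet q GG lam) hyK hzK' (isMinOn_iff.2 hymin)
    (hzmin'.on_subset (groupConstraintSet_anti q Finset.sdiff_subset lam))

/-- If `w` already satisfies a subset `S` of the group constraints, projecting `w` onto the
intersection of all constraints equals projecting onto the intersection of the remaining
constraints. -/
theorem stmt7 (q : ℝ≥0∞) [Fact (1 ≤ q)] {d : ℕ} (GG S : Finset (Finset (Fin d)))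
    (hS : S ⊆ GG) (lam : ℝ) (hlam : 0 < lam) (w y z : Fin d → ℝ)
    (hw : ∀ G ∈ S, grpNorm q G w ≤ lam)
    (hyK : ∀ G ∈ GG, grpNorm q G y ≤ lam)
    (hymin : ∀ u : Fin d → ℝ, (∀ G ∈ GG, grpNorm q G u ≤ lam) →
      ∑ j, (w j - y j) ^ 2 ≤ ∑ j, (w j - u j) ^ 2)
    (hzK : ∀ G ∈ GG \ S, grpNorm q G z ≤ lam)
    (hzmin : ∀ u : Fin d → ℝ, (∀ G ∈ GG \ S, grpNorm q G u ≤ lam) →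
      ∑ j, (w j - z j) ^ 2 ≤ ∑ j, (w j - u j) ^ 2) :
    y = z :=
  stmt7_general q GG S lam w y z hw hyK hymin hzK hzmin
end

section
/- Strong duality for the reduced projection (p = 2): if λ* ∈ ℝ^B_+ maximizes the dual function f(λ) = − Σ_j x_j²/(1 + Σ_r 1_{r,j} λ_r) − τ² Σ_r λ_r over λ ≥ 0, then the Euclidean projection of x onto τK₂ = { v : ‖P_{G_r} v‖_2 ≤ τ, ∀r } is given coordinate-wise by π(x)_j = x_j / (1 + Σ_r λ*_r 1_{r,j}). -/
/-! The dual objective `D` is differentiable on the nonnegative orthant, and its partial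
derivative in `λ_r` is `‖P_{G_r} v‖² - τ²`, where `v_j = x_j / (1 + Σ_r λ_r 1_{r,j})`. Fermat's rule
at the maximizer `λ*`, along the segments from `λ*` to points `λ ≥ 0`, gives
`Σ_r (λ_r - λ*_r) (‖P_{G_r} v*‖² - τ²) ≤ 0`. Taking `λ = λ* + e_r` shows that `v*` is feasible, and
taking `λ = 0` shows `Σ_r λ*_r (‖P_{G_r} v*‖² - τ²) ≥ 0`. Since `x - v* = (Σ_r λ*_r 1_r) v*`, for a
feasible `z` we get `⟨v* - z, x - v*⟩ = Σ_r λ*_r ⟨v* - z, P_{G_r} v*⟩ ≥ ½ Σ_r λ*_r (‖P_{G_r} v*‖² - τ²)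
≥ 0`, which is the variational characterisation of the projection. -/

open scoped Classical ENNReal NNReal

open Finset

lemma deriv_nonpos_of_isMaxOn_Icc {g : ℝ → ℝ} {g' : ℝ} (hmax : IsMaxOn g (Set.Icc 0 1) 0)
    (hg : HasDerivAt g g' 0) : g' ≤ 0 := by
  have hcone : (1 : ℝ) ∈ posTangentConeAt (Set.Icc (0 : ℝ) 1) 0 :=
    mem_posTangentConeAt_of_segment_subset (by simp [segment_eq_Icc])
  simpa using hmax.localize.hasFDerivWithinAt_nonpos
    hg.hasDerivWithinAt.hasFDerivWithinAt hcone

lemma sum_sq_sub_le_sum_sq_sub {ι : Type*} (s : Finset ι) {x v z : ι → ℝ}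
    (h : 0 ≤ ∑ j ∈ s, (v j - z j) * (x j - v j)) :
    ∑ j ∈ s, (x j - v j) ^ 2 ≤ ∑ j ∈ s, (x j - z j) ^ 2 := by
  have hsq : 0 ≤ ∑ j ∈ s, (v j - z j) ^ 2 := sum_nonneg fun j _ => sq_nonneg _
  have hexp : ∑ j ∈ s, (x j - z j) ^ 2 = ∑ j ∈ s, (x j - v j) ^ 2 + ∑ j ∈ s, (v j - z j) ^ 2
      + 2 * ∑ j ∈ s, (v j - z j) * (x j - v j) := by
    rw [mul_sum, ← sum_add_distrib, ← sum_add_distrib]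
    exact sum_congr rfl fun j _ => by ring
  linarith

lemma sum_sq_sub_sum_sq_le {ι : Type*} (s : Finset ι) (v z : ι → ℝ) :
    ∑ j ∈ s, v j ^ 2 - ∑ j ∈ s, z j ^ 2 ≤ 2 * ∑ j ∈ s, (v j - z j) * v j := by
  rw [← sum_sub_distrib, mul_sum]
  exact sum_le_sum fun j _ => by nlinarith [sq_nonneg (v j - z j)]

section GroupProjection

variable {ι κ : Type*} [Fintype κ] [DecidableEq ι] (G : κ → Finset ι)

def coverWeight (lam : κ → ℝ) (j : ι) : ℝ := ∑ r, if j ∈ G r then lam r else 0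

noncomputable def dualObjective [Fintype ι] (x : ι → ℝ) (τ : ℝ) (lam : κ → ℝ) : ℝ :=
  -(∑ j, x j ^ 2 / (1 + coverWeight G lam j)) - τ ^ 2 * ∑ r, lam r

noncomputable def primalOfDual (x : ι → ℝ) (lam : κ → ℝ) (j : ι) : ℝ := x j / (1 + coverWeight G lam j)

variable {G}

lemma coverWeight_nonneg {lam : κ → ℝ} (hlam : 0 ≤ lam) (j : ι) :
    0 ≤ coverWeight G lam j :=
  sum_nonneg fun r _ => by split_ifs <;> first | exact hlam r | exact le_rfl

lemma coverWeight_add_smul (lam μ : κ → ℝ) (t : ℝ) (j : ι) :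
    coverWeight G (lam + t • μ) j = coverWeight G lam j + t * coverWeight G μ j := by
  simp only [coverWeight, mul_sum, ← sum_add_distrib]
  exact sum_congr rfl fun r _ => by split_ifs <;> simp

lemma sum_mul_coverWeight [Fintype ι] (f : ι → ℝ) (μ : κ → ℝ) :
    ∑ j, f j * coverWeight G μ j = ∑ r, μ r * ∑ j ∈ G r, f j := by
  simp only [coverWeight, mul_sum, mul_ite, mul_zero]
  rw [sum_comm]
  refine sum_congr rfl fun r _ => ?_
  rw [← sum_filter, filter_mem_eq_inter, Finset.univ_inter]
  exact sum_congr rfl fun j _ => mul_comm _ _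

lemma hasDerivAt_dualObjective_add_smul [Fintype ι] (x : ι → ℝ) (τ : ℝ) {lam : κ → ℝ}
    (hlam : 0 ≤ lam) (μ : κ → ℝ) :
    HasDerivAt (fun t : ℝ => dualObjective G x τ (lam + t • μ))
      (∑ r, μ r * (∑ j ∈ G r, primalOfDual G x lam j ^ 2 - τ ^ 2)) 0 := by
  set c : ι → ℝ := fun j => 1 + coverWeight G lam j
  have hc : ∀ j, c j ≠ 0 := fun j => by have := coverWeight_nonneg (G := G) hlam j; positivity
  have hfun : (fun t : ℝ => dualObjective G x τ (lam + t • μ)) = fun t =>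
      -(∑ j, x j ^ 2 * (c j + t * coverWeight G μ j)⁻¹) - τ ^ 2 * (∑ r, lam r + t * ∑ r, μ r) := by
    funext t
    simp only [dualObjective, coverWeight_add_smul, c, div_eq_mul_inv, add_assoc, mul_sum,
      ← sum_add_distrib, Pi.add_apply, Pi.smul_apply, smul_eq_mul]
  have hterm : ∀ j, HasDerivAt (fun t : ℝ => x j ^ 2 * (c j + t * coverWeight G μ j)⁻¹)
      (-(primalOfDual G x lam j ^ 2 * coverWeight G μ j)) 0 := by
    intro j
    have h := (((hasDerivAt_id' (0 : ℝ)).mul_const (coverWeight G μ j)).const_add (c j)).inv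
      (by simpa using hc j) |>.const_mul (x j ^ 2)
    refine h.congr_deriv ?_
    simp only [primalOfDual, c, zero_mul, add_zero, one_mul, div_pow]
    ring
  have hlin : HasDerivAt (fun t : ℝ => τ ^ 2 * (∑ r, lam r + t * ∑ r, μ r)) (τ ^ 2 * ∑ r, μ r) 0 := by
    simpa using (((hasDerivAt_id' (0 : ℝ)).mul_const (∑ r, μ r)).const_add (∑ r, lam r)).const_mul
      (τ ^ 2)
  rw [hfun]
  refine ((HasDerivAt.fun_sum (u := univ) fun j _ => hterm j).neg.sub hlin).congr_deriv ?_
  rw [sum_neg_distrib, neg_neg, sum_mul_coverWeight, mul_sum, ← sum_sub_distrib]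
  exact sum_congr rfl fun r _ => by ring

lemma sum_mul_sub_nonpos_of_isMaxOn [Fintype ι] {x : ι → ℝ} {τ : ℝ} {lamstar : κ → ℝ}
    (hlamstar : 0 ≤ lamstar) (hmax : IsMaxOn (dualObjective G x τ) (Set.Ici 0) lamstar)
    {lam : κ → ℝ} (hlam : 0 ≤ lam) :
    ∑ r, (lam r - lamstar r) * (∑ j ∈ G r, primalOfDual G x lamstar j ^ 2 - τ ^ 2) ≤ 0 := by
  have hseg : IsMaxOn (fun t : ℝ => dualObjective G x τ (lamstar + t • (lam - lamstar)))
      (Set.Icc 0 1) 0 := by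
    intro t ht
    have hmem : lamstar + t • (lam - lamstar) ∈ Set.Ici 0 := by
      have h := add_nonneg (smul_nonneg (sub_nonneg.2 ht.2) hlamstar) (smul_nonneg ht.1 hlam)
      rw [Set.mem_Ici]
      convert h using 1
      module
    simpa using hmax hmem
  exact deriv_nonpos_of_isMaxOn_Icc hseg (hasDerivAt_dualObjective_add_smul x τ hlamstar _)

variable [Fintype ι] {x : ι → ℝ} {τ : ℝ} {lamstar : κ → ℝ}

lemma sum_sq_primalOfDual_le (hlamstar : 0 ≤ lamstar)
    (hmax : IsMaxOn (dualObjective G x τ) (Set.Ici 0) lamstar) (r : κ) :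
    ∑ j ∈ G r, primalOfDual G x lamstar j ^ 2 ≤ τ ^ 2 := by
  have h := sum_mul_sub_nonpos_of_isMaxOn hlamstar hmax
    (add_nonneg hlamstar (Pi.single_nonneg.2 zero_le_one : (0 : κ → ℝ) ≤ Pi.single r 1))
  simpa [Pi.single_apply] using h

lemma sum_mul_sum_sq_primalOfDual_sub_nonneg (hlamstar : 0 ≤ lamstar)
    (hmax : IsMaxOn (dualObjective G x τ) (Set.Ici 0) lamstar) :
    0 ≤ ∑ r, lamstar r * (∑ j ∈ G r, primalOfDual G x lamstar j ^ 2 - τ ^ 2) := by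
  simpa using sum_mul_sub_nonpos_of_isMaxOn hlamstar hmax le_rfl

lemma sum_mul_sub_primalOfDual_nonneg (hlamstar : 0 ≤ lamstar)
    (hmax : IsMaxOn (dualObjective G x τ) (Set.Ici 0) lamstar) {z : ι → ℝ}
    (hz : ∀ r, ∑ j ∈ G r, z j ^ 2 ≤ τ ^ 2) :
    0 ≤ ∑ j, (primalOfDual G x lamstar j - z j) * (x j - primalOfDual G x lamstar j) := by
  set v := primalOfDual G x lamstar
  have hresidual : ∀ j, x j - v j = v j * coverWeight G lamstar j := fun j => by
    have := coverWeight_nonneg (G := G) hlamstar j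
    simp only [v, primalOfDual]
    field_simp
    ring
  calc 0 ≤ (∑ r, lamstar r * (∑ j ∈ G r, v j ^ 2 - τ ^ 2)) / 2 :=
        by linarith [sum_mul_sum_sq_primalOfDual_sub_nonneg hlamstar hmax]
    _ ≤ ∑ r, lamstar r * ∑ j ∈ G r, (v j - z j) * v j := by
        rw [sum_div]
        gcongr with r
        rw [mul_div_assoc]
        exact mul_le_mul_of_nonneg_left (by linarith [hz r, sum_sq_sub_sum_sq_le (G r) v z])
          (hlamstar r)
    _ = ∑ j, (v j - z j) * (x j - v j) := by
        rw [← sum_mul_coverWeight]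
        exact sum_congr rfl fun j _ => by rw [hresidual]; ring

end GroupProjection

theorem stmt9_general {d B : ℕ} (G : Fin B → Finset (Fin d)) (x : Fin d → ℝ) (τ : ℝ)
    (lamstar : Fin B → ℝ) (hlamstar : ∀ r, 0 ≤ lamstar r)
    (hmax : ∀ lam : Fin B → ℝ, (∀ r, 0 ≤ lam r) →
      (-(∑ j, (x j) ^ 2 / (1 + ∑ r, (if j ∈ G r then lam r else 0)))
          - τ ^ 2 * (∑ r, lam r)) ≤
      (-(∑ j, (x j) ^ 2 / (1 + ∑ r, (if j ∈ G r then lamstar r else 0)))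
          - τ ^ 2 * (∑ r, lamstar r))) :
    let vstar : Fin d → ℝ := fun j => x j / (1 + ∑ r, (if j ∈ G r then lamstar r else 0))
    (∀ r, ∑ j ∈ G r, (vstar j) ^ 2 ≤ τ ^ 2) ∧
    (∀ z : Fin d → ℝ, (∀ r, ∑ j ∈ G r, (z j) ^ 2 ≤ τ ^ 2) →
      ∑ j, (x j - vstar j) ^ 2 ≤ ∑ j, (x j - z j) ^ 2) := by
  have hmaxOn : IsMaxOn (dualObjective G x τ) (Set.Ici 0) lamstar := fun lam hlam => hmax lam hlam
  exact ⟨sum_sq_primalOfDual_le hlamstar hmaxOn, fun z hz =>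
    sum_sq_sub_le_sum_sq_sub univ (sum_mul_sub_primalOfDual_nonneg hlamstar hmaxOn hz)⟩

/-- Strong duality for the reduced projection (`p = 2`): if `λ* ≥ 0` maximizes the dual
function, then the Euclidean projection of `x` onto `τK₂` is
`π(x)_j = x_j / (1 + Σ_r λ*_r 1_{r,j})`. -/
theorem stmt9 {d B : ℕ} (G : Fin B → Finset (Fin d)) (x : Fin d → ℝ) (τ : ℝ) (hτ : 0 < τ)
    (lamstar : Fin B → ℝ) (hlamstar : ∀ r, 0 ≤ lamstar r)
    (hmax : ∀ lam : Fin B → ℝ, (∀ r, 0 ≤ lam r) →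
      (-(∑ j, (x j) ^ 2 / (1 + ∑ r, (if j ∈ G r then lam r else 0)))
          - τ ^ 2 * (∑ r, lam r)) ≤
      (-(∑ j, (x j) ^ 2 / (1 + ∑ r, (if j ∈ G r then lamstar r else 0)))
          - τ ^ 2 * (∑ r, lamstar r))) :
    let vstar : Fin d → ℝ := fun j => x j / (1 + ∑ r, (if j ∈ G r then lamstar r else 0))
    (∀ r, ∑ j ∈ G r, (vstar j) ^ 2 ≤ τ ^ 2) ∧
    (∀ z : Fin d → ℝ, (∀ r, ∑ j ∈ G r, (z j) ^ 2 ≤ τ ^ 2) →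
      ∑ j, (x j - vstar j) ^ 2 ≤ ∑ j, (x j - z j) ^ 2) :=
  stmt9_general G x τ lamstar hlamstar hmax
end

section
/- Projection onto the ℓ1 ball by soft-thresholding: let w ∈ ℝ^d with ‖w‖_1 > τ > 0. If μ > 0 is such that Σ_j (|w_j| − μ)_+ = τ, then the Euclidean projection of w onto the ℓ1 ball of radius τ is given coordinate-wise by π(w)_j = (|w_j| − μ)_+ sign(w_j). -/
open scoped Classical ENNReal NNReal

/-- Projection onto the ℓ1 ball by soft-thresholding. -/
theorem stmt11 {d : ℕ} (w : Fin d → ℝ) (τ μ : ℝ) (hτ : 0 < τ) (hw : τ < ∑ j, |w j|)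
    (hμ : 0 < μ) (hsum : ∑ j, max (|w j| - μ) 0 = τ)
    (y : Fin d → ℝ)
    (hyB : ∑ j, |y j| ≤ τ)
    (hymin : ∀ z : Fin d → ℝ, (∑ j, |z j| ≤ τ) →
      ∑ j, (w j - y j) ^ 2 ≤ ∑ j, (w j - z j) ^ 2) :
    ∀ j, y j = max (|w j| - μ) 0 * Real.sign (w j) := by
  obtain ⟨x, hxdef⟩ : ∃ x : Fin d → ℝ, x = fun j => max (|w j| - μ) 0 * Real.sign (w j) :=
    ⟨_, rfl⟩
  have hxj : ∀ j, x j = max (|w j| - μ) 0 * Real.sign (w j) := fun j => by rw [hxdef]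
  have habs : ∀ j, |x j| = max (|w j| - μ) 0 := by
    intro j
    rcases lt_trichotomy (w j) 0 with h|h|h
    · rw [hxj j, Real.sign_of_neg h, abs_mul, abs_neg, abs_one, mul_one,
        abs_of_nonneg (le_max_right (|w j| - μ) 0)]
    · rw [hxj j, h, Real.sign_zero, mul_zero, abs_zero]
      exact (max_eq_right (by linarith)).symm
    · rw [hxj j, Real.sign_of_pos h, mul_one, abs_of_nonneg (le_max_right (|w j| - μ) 0)]
  have hxsum : ∑ j, |x j| = τ := by
    rw [← hsum]; exact Finset.sum_congr rfl (fun j _ => habs j)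
  have hdiff : ∀ j, |w j - x j| ≤ μ := by
    intro j
    rcases le_or_gt (|w j|) μ with h|h
    · have hx0 : x j = 0 := by
        rw [hxj j, max_eq_right (by linarith)]; ring
      rw [hx0, sub_zero]; exact h
    · have hmax : max (|w j| - μ) 0 = |w j| - μ := max_eq_left (by linarith)
      rcases lt_trichotomy (w j) 0 with hs|hs|hs
      · have hx : x j = w j + μ := by
          rw [hxj j, hmax, Real.sign_of_neg hs, abs_of_neg hs]; ring
        rw [hx]
        have h2 : w j - (w j + μ) = -μ := by ring
        rw [h2, abs_neg, abs_of_pos hμ]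
      · exfalso; rw [hs, abs_zero] at h; linarith
      · have hx : x j = w j - μ := by
          rw [hxj j, hmax, Real.sign_of_pos hs, abs_of_pos hs]; ring
        rw [hx]
        have h2 : w j - (w j - μ) = μ := by ring
        rw [h2, abs_of_pos hμ]
  have hprod : ∀ j, (w j - x j) * x j = μ * |x j| := by
    intro j
    rcases le_or_gt (|w j|) μ with h|h
    · have hx0 : x j = 0 := by
        rw [hxj j, max_eq_right (by linarith)]; ring
      simp [hx0]
    · have hmax : max (|w j| - μ) 0 = |w j| - μ := max_eq_left (by linarith)
      have habsj : |x j| = |w j| - μ := by rw [habs j, hmax]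
      rcases lt_trichotomy (w j) 0 with hs|hs|hs
      · have hx : x j = w j + μ := by
          rw [hxj j, hmax, Real.sign_of_neg hs, abs_of_neg hs]; ring
        rw [habsj, hx, abs_of_neg hs]; ring
      · exfalso; rw [hs, abs_zero] at h; linarith
      · have hx : x j = w j - μ := by
          rw [hxj j, hmax, Real.sign_of_pos hs, abs_of_pos hs]; ring
        rw [habsj, hx, abs_of_pos hs]; ring
  have hVI : ∑ j, (w j - x j) * (y j - x j) ≤ 0 := by
    have h1 : ∑ j, (w j - x j) * (y j - x j)
        = (∑ j, (w j - x j) * y j) - μ * τ := by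
      rw [← hxsum, Finset.mul_sum, ← Finset.sum_sub_distrib]
      refine Finset.sum_congr rfl (fun j _ => ?_)
      rw [← hprod j]; ring
    have h2 : ∑ j, (w j - x j) * y j ≤ ∑ j, μ * |y j| := by
      refine Finset.sum_le_sum (fun j _ => ?_)
      calc (w j - x j) * y j ≤ |(w j - x j) * y j| := le_abs_self _
        _ = |w j - x j| * |y j| := abs_mul _ _
        _ ≤ μ * |y j| := mul_le_mul_of_nonneg_right (hdiff j) (abs_nonneg _)
    have h3 : ∑ j, μ * |y j| = μ * ∑ j, |y j| := (Finset.mul_sum _ _ _).symm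
    have h4 : μ * ∑ j, |y j| ≤ μ * τ := mul_le_mul_of_nonneg_left hyB hμ.le
    linarith
  have hm := hymin x (le_of_eq hxsum)
  have hsum2 : ∑ j, (w j - x j) ^ 2 - 2 * (∑ j, (w j - x j) * (y j - x j))
      + ∑ j, (x j - y j) ^ 2 = ∑ j, (w j - y j) ^ 2 := by
    rw [Finset.mul_sum, ← Finset.sum_sub_distrib, ← Finset.sum_add_distrib]
    refine Finset.sum_congr rfl (fun j _ => ?_); ring
  have key : ∑ j, (x j - y j) ^ 2 ≤ 0 := by linarith
  have keq : ∑ j, (x j - y j) ^ 2 = 0 :=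
    le_antisymm key (Finset.sum_nonneg (fun j _ => sq_nonneg _))
  intro j
  have h0 : (x j - y j) ^ 2 = 0 :=
    (Finset.sum_eq_zero_iff_of_nonneg (fun i _ => sq_nonneg (x i - y i))).mp keq j
      (Finset.mem_univ j)
  have h1 := pow_eq_zero_iff (n := 2) (by norm_num) |>.mp h0
  have h2 := sub_eq_zero.mp h1
  rw [← hxj j, ← h2]
end

section
/- Threshold determination for ℓ1 projection: let w*_1 ≥ w*_2 ≥ ... ≥ w*_d ≥ 0 be the sorted absolute values of the entries of w, with ‖w‖_1 > τ > 0, and let k be an index such that Σ_{j=1}^{k−1}(w*_j − w*_k) ≤ τ ≤ Σ_{j=1}^{k}(w*_j − w*_{k+1}) (with w*_{d+1} := 0). Then μ = w*_k + k^{−1}( Σ_{j=1}^{k−1}(w*_j − w*_k) − τ ) satisfies μ ≥ 0 and Σ_{j=1}^d (w*_j − μ)_+ = τ. -/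
open scoped Classical ENNReal NNReal

/-!
The two conditions on `k` say exactly that `ws (k + 1) ≤ μ ≤ ws k`, the offset of `μ` from
`ws k` being chosen so that `∑_{j ≤ k} (ws j - μ) = τ`. Since `ws` is nonincreasing, the
positive part `(ws j - μ)₊` is then `ws j - μ` for `j ≤ k` and `0` for `j > k`.
-/

open Finset

lemma sum_range_succ_sub_eq (w : ℕ → ℝ) (k : ℕ) (c : ℝ) :
    ∑ j ∈ range (k + 1), (w j - c) = ∑ j ∈ range k, (w j - w k) + (k + 1) * (w k - c) := by
  simp only [sum_range_succ, sum_sub_distrib, sum_const, card_range, nsmul_eq_mul]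
  push_cast
  ring

lemma sum_range_max_sub_zero_of_antitone {w : ℕ → ℝ} (hw : Antitone w) {k d : ℕ} (hk : k < d)
    {μ : ℝ} (hμk : μ ≤ w k) (hμk₁ : w (k + 1) ≤ μ) :
    ∑ j ∈ range d, max (w j - μ) 0 = ∑ j ∈ range (k + 1), (w j - μ) := by
  rw [← sum_range_add_sum_Ico _ hk, add_eq_left.mpr]
  · refine sum_congr rfl fun j hj => max_eq_left (sub_nonneg.mpr ?_)
    exact hμk.trans (hw (Nat.lt_succ_iff.mp (mem_range.mp hj)))
  · refine sum_eq_zero fun j hj => max_eq_right (sub_nonpos.mpr ?_)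
    exact (hw (mem_Ico.mp hj).1).trans hμk₁

theorem stmt12_general {d : ℕ} (ws : ℕ → ℝ) (hmono : ∀ i j : ℕ, i ≤ j → ws j ≤ ws i)
    (hnonneg : ∀ j, 0 ≤ ws j)
    (τ : ℝ)
    (k : ℕ) (hk : k < d)
    (hlow : ∑ j ∈ Finset.range k, (ws j - ws k) ≤ τ)
    (hhigh : τ ≤ ∑ j ∈ Finset.range (k + 1), (ws j - ws (k + 1))) :
    let μ : ℝ := ws k + ((∑ j ∈ Finset.range k, (ws j - ws k)) - τ) / (k + 1)
    0 ≤ μ ∧ ∑ j ∈ Finset.range d, max (ws j - μ) 0 = τ := by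
  intro μ
  set L := ∑ j ∈ range k, (ws j - ws k)
  have hk₁ : (0 : ℝ) < k + 1 := by positivity
  have hgap : (k + 1) * (ws k - μ) = τ - L := by
    simp only [μ]
    field_simp
    ring
  have hμk : μ ≤ ws k :=
    sub_nonneg.mp (nonneg_of_mul_nonneg_right (by linarith) hk₁)
  have hμk₁ : ws (k + 1) ≤ μ := by
    rw [sum_range_succ_sub_eq] at hhigh
    exact sub_le_sub_iff_left _ |>.mp (le_of_mul_le_mul_left (by linarith) hk₁)
  refine ⟨(hnonneg _).trans hμk₁, ?_⟩
  rw [sum_range_max_sub_zero_of_antitone hmono hk hμk hμk₁, sum_range_succ_sub_eq, hgap]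
  ring

/-- Threshold determination for the ℓ1 projection: with `ws` the nonincreasing rearrangement
of the absolute values (0-based, padded with zeros beyond `d`), the explicit `μ` is
nonnegative and satisfies `Σ_j (ws_j - μ)₊ = τ`. -/
theorem stmt12 {d : ℕ} (ws : ℕ → ℝ) (hmono : ∀ i j : ℕ, i ≤ j → ws j ≤ ws i)
    (hnonneg : ∀ j, 0 ≤ ws j) (hpad : ∀ j, d ≤ j → ws j = 0)
    (τ : ℝ) (hτ : 0 < τ) (hbig : τ < ∑ j ∈ Finset.range d, ws j)
    (k : ℕ) (hk : k < d)
    (hlow : ∑ j ∈ Finset.range k, (ws j - ws k) ≤ τ)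
    (hhigh : τ ≤ ∑ j ∈ Finset.range (k + 1), (ws j - ws (k + 1))) :
    let μ : ℝ := ws k + ((∑ j ∈ Finset.range k, (ws j - ws k)) - τ) / (k + 1)
    0 ≤ μ ∧ ∑ j ∈ Finset.range d, max (ws j - μ) 0 = τ :=
  stmt12_general ws hmono hnonneg τ k hk hlow hhigh
end
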